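/- Let a sequence of nonnegative reals m_t satisfy m_0 = 0 and m_{t+1} ≤ (1−ν)(1+γ) m_t + (1−ν)(1+1/γ) C for all t, where 0 < ν < 1, C ≥ 0, and γ = ν/(2(1−ν)). Then for all t, m_t ≤ (4(1−ν)/ν²) C. -/
import Mathlib


/-- Error-memory boundedness: if `m 0 = 0` and
`m (t+1) ≤ (1-ν)(1+γ) m t + (1-ν)(1+1/γ) C` with `γ = ν/(2(1-ν))`,
then `m t ≤ (4(1-ν)/ν²) C` for all `t`. -/
theorem stmt_9 (m : ℕ → ℝ) (ν γ C : ℝ)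
    (hm_nonneg : ∀ t, 0 ≤ m t) (hm0 : m 0 = 0)
    (hν0 : 0 < ν) (hν1 : ν < 1) (hC : 0 ≤ C)
    (hγ : γ = ν / (2 * (1 - ν)))
    (hrec : ∀ t, m (t + 1) ≤ (1 - ν) * (1 + γ) * m t + (1 - ν) * (1 + 1 / γ) * C) :
    ∀ t, m t ≤ (4 * (1 - ν) / ν ^ 2) * C := by
  have h1ν : (0:ℝ) < 1 - ν := by linarith
  have hγpos : 0 < γ := by
    rw [hγ]; positivity
  have hB : 0 ≤ (4 * (1 - ν) / ν ^ 2) * C := by positivity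
  -- contraction factor
  have hfac : (1 - ν) * (1 + γ) = 1 - ν / 2 := by
    rw [hγ]; field_simp; ring
  have hadd : (1 - ν) * (1 + 1 / γ) = (1 - ν) * (2 - ν) / ν := by
    rw [hγ]; field_simp; ring_nf
  intro t
  induction t with
  | zero => rw [hm0]; exact hB
  | succ t ih =>
    have h := hrec t
    rw [hfac, hadd] at h
    have hν2 : (0:ℝ) < ν ^ 2 := by positivity
    have ihν2 : m t * ν ^ 2 ≤ 4 * (1 - ν) * C := by
      have := mul_le_mul_of_nonneg_right ih hν2.le
      calc m t * ν ^ 2 ≤ 4 * (1 - ν) / ν ^ 2 * C * ν ^ 2 := this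
        _ = 4 * (1 - ν) * C := by field_simp
    have key : (1 - ν / 2) * m t + (1 - ν) * (2 - ν) / ν * C ≤ (4 * (1 - ν) / ν ^ 2) * C := by
      rw [← sub_nonneg]
      have expand : (4 * (1 - ν) / ν ^ 2) * C - ((1 - ν / 2) * m t + (1 - ν) * (2 - ν) / ν * C)
          = ((4 * (1 - ν) * C - (1 - ν) * (2 - ν) * C * ν) - (1 - ν / 2) * (m t * ν ^ 2)) / ν ^ 2 := by
        field_simp; ring
      rw [expand]
      apply div_nonneg _ hν2.le
      nlinarith [mul_le_mul_of_nonneg_left ihν2 (by linarith : (0:ℝ) ≤ 1 - ν / 2),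
        mul_nonneg (mul_nonneg h1ν.le hC) (sq_nonneg ν)]
    linarith
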